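/- arXiv:2504.20269 — 3 statements merged into one kernel-verified Lean document; each statement's English description precedes it below -/
import Mathlib

section
/- Let (X, Σ, μ) be a probability space, let φ : X → X be an invertible measure-preserving map, let F ⊆ L²(X) be a finite-dimensional linear subspace and let ε > 0. Then there exist K₀ ∈ ℕ and δ > 0 such that: whenever n ∈ ℕ, T̂ₙ : Fₙ → Fₙ is a linear operator on the n-th delay subspace Fₙ, and K ≥ K₀ is such that ‖T̂ₙ^k f − T_φ^k f‖₂ ≤ δ‖f‖₂ holds for all f ∈ Fₙ and all k ∈ {0, …, K−1}, then dim(Fₙ) ≥ K (h_apr(T_φ, F) − ε). -/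
open MeasureTheory

/-!
If `T` is isometric and every `T^k f` with `f ∈ ω`, `k < K` lies within `δ` of a subspace `G`,
then writing `k = K j + r` shows that `⋃_{k<N} T^k ω` lies within `δ` of
`∑_{j ≤ N/K} T^{Kj} G`, of dimension at most `(N/K + 1) dim G`; hence
`h_apr(T, ω, δ) ≤ dim G / K`. Take `ω ⊆ F` finite and `δ' > 0` with
`h_apr(T_φ, ω, δ') > h_apr(T_φ, F) - ε`, and `δ` so small that `δ ‖f‖ < δ'` on `ω`: the hypothesis
on `T̂ₙ` then says that `T̂ₙ^k f ∈ Fₙ` approximates `T_φ^k f` within `δ'`, so `G = Fₙ` applies.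
The Koopman operator is isometric because `φ` preserves `μ`.
-/

/-- `H_apr(ω, δ)`: the minimal dimension of a finite-dimensional subspace `F ⊆ H` such that
every `x ∈ ω` is within distance `< δ` of some `y ∈ F`. -/
noncomputable def Hapr {H : Type*} [NormedAddCommGroup H] [InnerProductSpace ℂ H]
    (ω : Set H) (δ : ℝ) : ℕ :=
  sInf {d : ℕ | ∃ F : Submodule ℂ H, FiniteDimensional ℂ ↥F ∧ Module.finrank ℂ ↥F = d ∧
    ∀ x ∈ ω, ∃ y ∈ F, ‖x - y‖ < δ}

/-- `h_apr(T, ω, δ) = lim_{n → ∞} (1/n) H_apr(⋃_{k=0}^{n-1} T^k ω, δ)` (the limit exists by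
subadditivity, hence coincides with the limit superior used here). -/
noncomputable def haprδ {H : Type*} [NormedAddCommGroup H] [InnerProductSpace ℂ H]
    (T : H → H) (ω : Set H) (δ : ℝ) : ℝ :=
  Filter.limsup (fun n : ℕ => (Hapr (⋃ k < n, T^[k] '' ω) δ : ℝ) / n) Filter.atTop

/-- `h_apr(T, ω) = sup_{δ > 0} h_apr(T, ω, δ)`, the approximation entropy of `ω` with
respect to `T`. -/
noncomputable def haprω {H : Type*} [NormedAddCommGroup H] [InnerProductSpace ℂ H]
    (T : H → H) (ω : Set H) : ℝ :=
  ⨆ (δ : ℝ) (_ : 0 < δ), haprδ T ω δ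

/-- `h_apr(T, F)`: the approximation entropy of a subspace `F`, the supremum of `h_apr(T, ω)`
over all finite subsets `ω ⊆ F`. -/
noncomputable def haprSub {H : Type*} [NormedAddCommGroup H] [InnerProductSpace ℂ H]
    (T : H → H) (F : Submodule ℂ H) : ℝ :=
  ⨆ (ω : Finset H) (_ : (ω : Set H) ⊆ (F : Set H)), haprω T (ω : Set H)

/-- The `n`-th delay subspace `Fₙ = span ⋃_{k=0}^{n} T^k F`. -/
noncomputable def delaySub {H : Type*} [NormedAddCommGroup H] [InnerProductSpace ℂ H]
    (T : H → H) (F : Submodule ℂ H) (n : ℕ) : Submodule ℂ H :=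
  Submodule.span ℂ (⋃ k ≤ n, T^[k] '' (F : Set H))

theorem Submodule.finrank_finset_sup_le_sum {K V ι : Type*} [DivisionRing K] [AddCommGroup V]
    [Module K V] (s : Finset ι) (S : ι → Submodule K V) [∀ i, FiniteDimensional K (S i)] :
    Module.finrank K ↥(s.sup S) ≤ ∑ i ∈ s, Module.finrank K (S i) := by
  classical
  induction s using Finset.induction_on with
  | empty => simp
  | insert i s hi ih =>
    rw [Finset.sup_insert, Finset.sum_insert hi]
    exact (Submodule.finrank_add_le_finrank_add_finrank _ _).trans (Nat.add_le_add_left ih _)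

theorem Finset.exists_pos_mul_norm_lt {E : Type*} [SeminormedAddCommGroup E] (s : Finset E)
    {η : ℝ} (hη : 0 < η) : ∃ δ > 0, ∀ x ∈ s, δ * ‖x‖ < η := by
  set M := ∑ x ∈ s, ‖x‖
  have hM : 0 ≤ M := Finset.sum_nonneg fun x _ => norm_nonneg x
  refine ⟨η / (M + 1), by positivity, fun x hx => ?_⟩
  calc η / (M + 1) * ‖x‖ ≤ η / (M + 1) * M := by
        gcongr; exact Finset.single_le_sum (fun y _ => norm_nonneg y) hx
    _ < η := by rw [div_mul_eq_mul_div, div_lt_iff₀ (by positivity)]; nlinarith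

theorem MeasureTheory.Lp.norm_eq_of_ae_eq_comp {X E : Type*} [MeasurableSpace X]
    [NormedAddCommGroup E] {μ : Measure X} {p : ENNReal} {φ : X → X}
    (hφ : MeasurePreserving φ μ μ) {f g : Lp E p μ} (h : (g : X → E) =ᵐ[μ] (f : X → E) ∘ φ) :
    ‖g‖ = ‖f‖ := by
  rw [Lp.norm_def, Lp.norm_def, eLpNorm_congr_ae h,
    eLpNorm_comp_measurePreserving (Lp.aestronglyMeasurable f) hφ]

theorem Filter.limsup_div_le_of_le {a : ℕ → ℝ} {K : ℕ} {d : ℝ} (ha : ∀ N, 0 ≤ a N)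
    (h : ∀ N, a N ≤ ((N : ℝ) / K + 1) * d) :
    limsup (fun N : ℕ => a N / N) atTop ≤ d / K := by
  have hlim : Tendsto (fun N : ℕ => d / K + d / N) atTop (nhds (d / K)) := by
    simpa using tendsto_const_nhds.add (tendsto_const_div_atTop_nhds_zero_nat d)
  rw [← hlim.limsup_eq]
  refine limsup_le_limsup ?_ (isCoboundedUnder_le_of_le _ fun N => div_nonneg (ha N) N.cast_nonneg)
    hlim.isBoundedUnder_le
  filter_upwards [eventually_gt_atTop 0] with N hN
  have hN : (0 : ℝ) < N := Nat.cast_pos.2 hN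
  calc a N / N ≤ ((N : ℝ) / K + 1) * d / N := by gcongr; exact h N
    _ = d / K + d / N := by field_simp

section ApproximationEntropy

variable {H : Type*} [NormedAddCommGroup H] [InnerProductSpace ℂ H]

theorem Hapr_le_finrank {ω : Set H} {δ : ℝ} (G : Submodule ℂ H) [FiniteDimensional ℂ G]
    (hG : ∀ x ∈ ω, ∃ y ∈ G, ‖x - y‖ < δ) : Hapr ω δ ≤ Module.finrank ℂ G :=
  Nat.sInf_le ⟨G, inferInstance, rfl, hG⟩

theorem exists_lt_haprδ_of_lt_haprSub {T : H → H} {F : Submodule ℂ H} {c : ℝ} (hc₀ : 0 ≤ c)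
    (hc : c < haprSub T F) :
    ∃ ω : Finset H, (ω : Set H) ⊆ F ∧ ∃ δ > 0, c < haprδ T ω δ := by
  -- a supremum over a false condition is `sSup ∅ = 0 ≤ c` in `ℝ`
  obtain ⟨ω, hω⟩ := exists_lt_of_lt_ciSup hc
  by_cases hωF : (ω : Set H) ⊆ F
  · rw [ciSup_pos hωF, haprω] at hω
    obtain ⟨δ, hδ⟩ := exists_lt_of_lt_ciSup hω
    by_cases hδ₀ : 0 < δ
    · exact ⟨ω, hωF, δ, hδ₀, by rwa [ciSup_pos hδ₀] at hδ⟩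
    · simp only [hδ₀, Real.iSup_of_isEmpty] at hδ
      linarith
  · simp only [hωF, Real.iSup_of_isEmpty] at hω
    linarith

theorem le_delaySub (T : H → H) (F : Submodule ℂ H) (n : ℕ) : F ≤ delaySub T F n :=
  fun x hx => Submodule.subset_span (Set.mem_iUnion₂.2 ⟨0, n.zero_le, x, hx, rfl⟩)

theorem finiteDimensional_delaySub (T : H →ₗ[ℂ] H) (F : Submodule ℂ H) [FiniteDimensional ℂ F]
    (n : ℕ) : FiniteDimensional ℂ (delaySub T F n) := by
  refine Submodule.finiteDimensional_of_le (S₂ := (Finset.range (n + 1)).sup fun k => F.map (T ^ k))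
    (Submodule.span_le.2 ?_)
  rintro _ ⟨_, ⟨k, rfl⟩, _, ⟨hk, rfl⟩, x, hx, rfl⟩
  exact SetLike.le_def.1 (Finset.le_sup (f := fun k => F.map (T ^ k))
    (Finset.mem_range_succ_iff.2 hk)) ⟨x, hx, Module.End.pow_apply T k x⟩

variable {T : H →ₗ[ℂ] H}

theorem norm_iterate_sub_iterate (hT : ∀ x, ‖T x‖ = ‖x‖) (n : ℕ) (x y : H) :
    ‖T^[n] x - T^[n] y‖ = ‖x - y‖ := by
  rw [← Module.End.pow_apply, ← Module.End.pow_apply, ← map_sub]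
  induction n with
  | zero => rfl
  | succ n ih => rw [pow_succ', Module.End.mul_apply, hT, ih]

theorem Hapr_iUnion_iterate_le (hT : ∀ x, ‖T x‖ = ‖x‖) {ω : Set H} {δ : ℝ} (G : Submodule ℂ H)
    [FiniteDimensional ℂ G] {K : ℕ} (hK : 0 < K)
    (hG : ∀ x ∈ ω, ∀ k < K, ∃ y ∈ G, ‖T^[k] x - y‖ < δ) (N : ℕ) :
    Hapr (⋃ k < N, T^[k] '' ω) δ ≤ (N / K + 1) * Module.finrank ℂ G := by
  -- `T^[k] x = T^[K * (k / K)] (T^[k % K] x)` is approximated from `T^[K * (k / K)] '' G`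
  let V := (Finset.range (N / K + 1)).sup fun j => G.map (T ^ (K * j))
  have hV : ∀ x ∈ ⋃ k < N, T^[k] '' ω, ∃ y ∈ V, ‖x - y‖ < δ := by
    simp only [Set.mem_iUnion, Set.mem_image]
    rintro _ ⟨k, hk, x, hx, rfl⟩
    obtain ⟨y, hyG, hxy⟩ := hG x hx (k % K) (Nat.mod_lt k hK)
    have hj : k / K ∈ Finset.range (N / K + 1) :=
      Finset.mem_range_succ_iff.2 (Nat.div_le_div_right hk.le)
    refine ⟨(T ^ (K * (k / K))) y,
      SetLike.le_def.1 (Finset.le_sup (f := fun j => G.map (T ^ (K * j))) hj)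
        (Submodule.mem_map_of_mem hyG), ?_⟩
    rwa [← norm_iterate_sub_iterate hT (K * (k / K)), ← Function.iterate_add_apply,
      Nat.div_add_mod, ← Module.End.pow_apply T (K * (k / K))] at hxy
  calc Hapr (⋃ k < N, T^[k] '' ω) δ ≤ Module.finrank ℂ V := Hapr_le_finrank V hV
    _ ≤ ∑ j ∈ Finset.range (N / K + 1), Module.finrank ℂ (G.map (T ^ (K * j))) :=
      Submodule.finrank_finset_sup_le_sum _ _
    _ ≤ ∑ j ∈ Finset.range (N / K + 1), Module.finrank ℂ G :=
      Finset.sum_le_sum fun j _ => Submodule.finrank_map_le _ _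
    _ = (N / K + 1) * Module.finrank ℂ G := by simp

theorem haprδ_le_finrank_div (hT : ∀ x, ‖T x‖ = ‖x‖) {ω : Set H} {δ : ℝ} (G : Submodule ℂ H)
    [FiniteDimensional ℂ G] {K : ℕ} (hK : 0 < K)
    (hG : ∀ x ∈ ω, ∀ k < K, ∃ y ∈ G, ‖T^[k] x - y‖ < δ) :
    haprδ T ω δ ≤ Module.finrank ℂ G / K := by
  refine Filter.limsup_div_le_of_le (fun N => Nat.cast_nonneg _) fun N => ?_
  calc (Hapr (⋃ k < N, T^[k] '' ω) δ : ℝ) ≤ ((N / K + 1 : ℕ) : ℝ) * Module.finrank ℂ G := by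
        exact_mod_cast Hapr_iUnion_iterate_le hT G hK hG N
    _ ≤ ((N : ℝ) / K + 1) * Module.finrank ℂ G := by
        push_cast; gcongr; exact Nat.cast_div_le

end ApproximationEntropy

theorem stmt2_general {X : Type*} [MeasurableSpace X] (μ : Measure X)
    (φ : X → X) (hφ : MeasurePreserving φ μ μ)
    (T : Lp ℂ 2 μ →L[ℂ] Lp ℂ 2 μ)
    (hT : ∀ f : Lp ℂ 2 μ, (T f : X → ℂ) =ᵐ[μ] (f : X → ℂ) ∘ φ)
    (F : Submodule ℂ (Lp ℂ 2 μ)) [FiniteDimensional ℂ ↥F] (ε : ℝ) (hε : 0 < ε) :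
    ∃ (K₀ : ℕ) (δ : ℝ), 0 < δ ∧
      ∀ (n : ℕ) (Tn : ↥(delaySub (⇑T) F n) →ₗ[ℂ] ↥(delaySub (⇑T) F n)) (K : ℕ), K₀ ≤ K →
        (∀ (f : ↥(delaySub (⇑T) F n)) (k : ℕ), k < K →
          ‖(((Tn ^ k) f : ↥(delaySub (⇑T) F n)) : Lp ℂ 2 μ) - (T ^ k) (f : Lp ℂ 2 μ)‖
            ≤ δ * ‖(f : Lp ℂ 2 μ)‖) →
        (K : ℝ) * (haprSub (⇑T) F - ε)
          ≤ (Module.finrank ℂ ↥(delaySub (⇑T) F n) : ℝ) := by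
  have hiso : ∀ f, ‖(T : Lp ℂ 2 μ →ₗ[ℂ] Lp ℂ 2 μ) f‖ = ‖f‖ := fun f =>
    Lp.norm_eq_of_ae_eq_comp hφ (hT f)
  by_cases hh : haprSub (⇑T) F - ε ≤ 0
  · exact ⟨0, 1, one_pos, fun n _ K _ _ =>
      (mul_nonpos_of_nonneg_of_nonpos K.cast_nonneg hh).trans (Nat.cast_nonneg _)⟩
  obtain ⟨ω, hωF, δ', hδ', hlt⟩ :=
    exists_lt_haprδ_of_lt_haprSub (not_le.1 hh).le (sub_lt_self _ hε)
  obtain ⟨δ, hδ, hδω⟩ := ω.exists_pos_mul_norm_lt hδ'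
  refine ⟨1, δ, hδ, fun n Tn K hK hTn => ?_⟩
  have := finiteDimensional_delaySub (T : Lp ℂ 2 μ →ₗ[ℂ] Lp ℂ 2 μ) F n
  have happrox : ∀ f ∈ (ω : Set (Lp ℂ 2 μ)), ∀ k < K,
      ∃ y ∈ delaySub (⇑T) F n, ‖(⇑T)^[k] f - y‖ < δ' := by
    intro f hf k hk
    have hfn := le_delaySub (⇑T) F n (hωF hf)
    refine ⟨(Tn ^ k) ⟨f, hfn⟩, Submodule.coe_mem _, ?_⟩
    rw [← FunLike.coe_pow_eq_iterate, norm_sub_rev]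
    exact (hTn ⟨f, hfn⟩ k hk).trans_lt (hδω f hf)
  have hK₀ : (0 : ℝ) < K := by exact_mod_cast hK
  rw [← le_div_iff₀' hK₀]
  exact hlt.le.trans (haprδ_le_finrank_div hiso _ hK happrox)

/-- Let `(X, Σ, μ)` be a probability space, `φ : X → X` an invertible
measure-preserving map with (unitary) Koopman operator `T = T_φ` on `L²(X)`, let `F ⊆ L²(X)`
be a finite-dimensional subspace and `ε > 0`. Then there exist `K₀ ∈ ℕ` and `δ > 0` such
that: whenever `n ∈ ℕ`, `T̂ₙ : Fₙ → Fₙ` is a linear operator on the `n`-th delay subspace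
`Fₙ = span ⋃_{k=0}^{n} T_φ^k F` and `K ≥ K₀` satisfies `‖T̂ₙ^k f - T_φ^k f‖₂ ≤ δ ‖f‖₂`
for all `f ∈ Fₙ` and `k ∈ {0, …, K-1}`, then `dim Fₙ ≥ K (h_apr(T_φ, F) - ε)`. -/
theorem stmt2 {X : Type*} [MeasurableSpace X] (μ : Measure X) [IsProbabilityMeasure μ]
    (φ : X → X) (hφ : MeasurePreserving φ μ μ)
    (hinv : ∃ ψ : X → X, MeasurePreserving ψ μ μ ∧
      (∀ᵐ x ∂μ, ψ (φ x) = x) ∧ (∀ᵐ x ∂μ, φ (ψ x) = x))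
    (T : Lp ℂ 2 μ →L[ℂ] Lp ℂ 2 μ)
    (hT : ∀ f : Lp ℂ 2 μ, (T f : X → ℂ) =ᵐ[μ] (f : X → ℂ) ∘ φ)
    (F : Submodule ℂ (Lp ℂ 2 μ)) [FiniteDimensional ℂ ↥F] (ε : ℝ) (hε : 0 < ε) :
    ∃ (K₀ : ℕ) (δ : ℝ), 0 < δ ∧
      ∀ (n : ℕ) (Tn : ↥(delaySub (⇑T) F n) →ₗ[ℂ] ↥(delaySub (⇑T) F n)) (K : ℕ), K₀ ≤ K →
        (∀ (f : ↥(delaySub (⇑T) F n)) (k : ℕ), k < K →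
          ‖(((Tn ^ k) f : ↥(delaySub (⇑T) F n)) : Lp ℂ 2 μ) - (T ^ k) (f : Lp ℂ 2 μ)‖
            ≤ δ * ‖(f : Lp ℂ 2 μ)‖) →
        (K : ℝ) * (haprSub (⇑T) F - ε)
          ≤ (Module.finrank ℂ ↥(delaySub (⇑T) F n) : ℝ) :=
  stmt2_general μ φ hφ T hT F ε hε
end

section
/- Let H be a Hilbert space and T : H → H a unitary operator. For any finite-dimensional subspace F ⊆ H and any finite subset ω ⊆ F with F = span(ω), one has h_apr(T, F) = h_apr(T, ω) = h_apr(T restricted to G) = h_apr(T, G), where G is the closed linear span of ⋃_{k ∈ ℤ} T^k F. Moreover, h_apr(T) = sup_F h_apr(T, F), where the supremum is taken over all finite-dimensional subspaces F of H. -/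
open MeasureTheory

/-!
Everything reduces to one comparison: if a finite set `A` lies in the closed linear span of the
full orbit `⋃_{k ∈ ℤ} T^k B` of a finite set `B`, then `h_apr(T, A) ≤ h_apr(T, B)`. At scale `δ`,
`A` is within `δ/2` of the span of the finitely many points `T^j B`, `|j| ≤ m`. Writing these
approximants as linear combinations with bounded coefficients and using that `T` is an isometry,
any subspace approximating the orbit of `⋃_{|j| ≤ m} T^j B` well enough also approximates the orbit
of `A` at scale `δ`. That set is `T^{-m}` applied to the first `2m + 1` iterates of `B`; applying a
contraction commuting with `T`, or adding finitely many iterates, changes `H_apr` of the `n`-th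
orbit segment by a bounded amount only, which vanishes after dividing by `n`.

The equalities follow because the entropy of `span ω` is attained at `ω` itself, and because
approximating finite sets inside the closed subspace `G` costs the same number of dimensions as
approximating them in `H`: project orthogonally onto `G`.
-/

def orbitSegment {α : Type*} (f : α → α) (A : Set α) (n : ℕ) : Set α :=
  ⋃ k < n, f^[k] '' A

section OrbitSegment

variable {α β : Type*} {f : α → α} {A : Set α}

theorem mem_orbitSegment {n : ℕ} {x : α} :
    x ∈ orbitSegment f A n ↔ ∃ k < n, ∃ a ∈ A, f^[k] a = x := by
  simp [orbitSegment]

theorem orbitSegment_succ (n : ℕ) :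
    orbitSegment f A (n + 1) = orbitSegment f A n ∪ f^[n] '' A :=
  Set.biUnion_lt_succ _ n

theorem orbitSegment_add (n p : ℕ) :
    orbitSegment f A (n + p) = orbitSegment f A n ∪ f^[n] '' orbitSegment f A p := by
  ext x
  simp only [Set.mem_union, Set.mem_image, mem_orbitSegment]
  constructor
  · rintro ⟨k, hk, a, ha, rfl⟩
    by_cases hkn : k < n
    · exact Or.inl ⟨k, hkn, a, ha, rfl⟩
    · refine Or.inr ⟨f^[k - n] a, ⟨k - n, by omega, a, ha, rfl⟩, ?_⟩
      rw [← Function.iterate_add_apply, Nat.add_sub_cancel' (not_lt.1 hkn)]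
  · rintro (⟨k, hk, a, ha, rfl⟩ | ⟨_, ⟨k, hk, a, ha, rfl⟩, rfl⟩)
    · exact ⟨k, by omega, a, ha, rfl⟩
    · exact ⟨n + k, by omega, a, ha, (Function.iterate_add_apply f n k a)⟩

theorem orbitSegment_orbitSegment_subset (n p : ℕ) :
    orbitSegment f (orbitSegment f A p) n ⊆ orbitSegment f A (n + p) := by
  intro x hx
  obtain ⟨k, hk, _, hy, rfl⟩ := mem_orbitSegment.1 hx
  obtain ⟨j, hj, a, ha, rfl⟩ := mem_orbitSegment.1 hy
  exact mem_orbitSegment.2 ⟨k + j, by omega, a, ha, Function.iterate_add_apply f k j a⟩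

theorem Set.Finite.orbitSegment (hA : A.Finite) (n : ℕ) : (orbitSegment f A n).Finite :=
  Set.Finite.biUnion (Set.finite_Iio n) fun _ _ => hA.image _

theorem Function.Semiconj.image_orbitSegment {e : α → β} {g : β → β}
    (h : Function.Semiconj e f g) (n : ℕ) :
    e '' orbitSegment f A n = orbitSegment g (e '' A) n := by
  simp only [orbitSegment, Set.image_iUnion₂, Set.image_image, (h.iterate_right _).eq]

end OrbitSegment

theorem exists_near_sum_smul {𝕜 E ι : Type*} [NormedField 𝕜] [SeminormedAddCommGroup E]
    [NormedSpace 𝕜 E] (F : Submodule 𝕜 E) (s : Finset ι) (v : ι → E) (c : ι → 𝕜) {η : ℝ}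
    (hv : ∀ i ∈ s, ∃ y ∈ F, ‖v i - y‖ < η) :
    ∃ y ∈ F, ‖∑ i ∈ s, c i • v i - y‖ ≤ (∑ i ∈ s, ‖c i‖) * η := by
  choose! y hyF hy using hv
  refine ⟨∑ i ∈ s, c i • y i, F.sum_mem fun i hi => F.smul_mem _ (hyF i hi), ?_⟩
  rw [← Finset.sum_sub_distrib, Finset.sum_mul]
  refine (norm_sum_le _ _).trans (Finset.sum_le_sum fun i hi => ?_)
  rw [← smul_sub, norm_smul]
  exact mul_le_mul_of_nonneg_left (hy i hi).le (norm_nonneg _)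

theorem LinearIsometryEquiv.coe_pow {R E : Type*} [Semiring R] [SeminormedAddCommGroup E]
    [Module R E] (T : E ≃ₗᵢ[R] E) (n : ℕ) : ⇑(T ^ n) = (⇑T)^[n] :=
  hom_coe_pow _ rfl (fun _ _ => rfl) T n

section Hapr

variable {E E' : Type*} [NormedAddCommGroup E] [InnerProductSpace ℂ E]
  [NormedAddCommGroup E'] [InnerProductSpace ℂ E'] {A B : Set E} {δ : ℝ}

theorem Hapr_le_finrank_s7 (F : Submodule ℂ E) [FiniteDimensional ℂ F]
    (hF : ∀ x ∈ A, ∃ y ∈ F, ‖x - y‖ < δ) : Hapr A δ ≤ Module.finrank ℂ F :=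
  Nat.sInf_le ⟨F, inferInstance, rfl, hF⟩

theorem exists_finrank_eq_Hapr (hA : A.Finite) (hδ : 0 < δ) :
    ∃ F : Submodule ℂ E, FiniteDimensional ℂ F ∧ Module.finrank ℂ F = Hapr A δ ∧
      ∀ x ∈ A, ∃ y ∈ F, ‖x - y‖ < δ :=
  Nat.sInf_mem (s := {d | ∃ F : Submodule ℂ E, FiniteDimensional ℂ F ∧
      Module.finrank ℂ F = d ∧ ∀ x ∈ A, ∃ y ∈ F, ‖x - y‖ < δ})
    ⟨_, Submodule.span ℂ A, FiniteDimensional.span_of_finite ℂ hA, rfl,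
      fun x hx => ⟨x, Submodule.subset_span hx, by simpa using hδ⟩⟩

theorem Hapr_le_ncard (hA : A.Finite) (hδ : 0 < δ) : Hapr A δ ≤ A.ncard := by
  lift A to Finset E using hA
  have := FiniteDimensional.span_finset ℂ A
  calc Hapr (A : Set E) δ ≤ Module.finrank ℂ (Submodule.span ℂ (A : Set E)) :=
        Hapr_le_finrank_s7 _ fun x hx => ⟨x, Submodule.subset_span hx, by simpa using hδ⟩
    _ ≤ A.card := finrank_span_finset_le_card A
    _ = (A : Set E).ncard := (Set.ncard_coe_finset A).symm

theorem Hapr_mono (hAB : A ⊆ B) (hB : B.Finite) (hδ : 0 < δ) : Hapr A δ ≤ Hapr B δ := by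
  obtain ⟨F, _, hF, hBF⟩ := exists_finrank_eq_Hapr hB hδ
  exact hF ▸ Hapr_le_finrank_s7 F fun x hx => hBF x (hAB hx)

theorem Hapr_union_le (hA : A.Finite) (hB : B.Finite) (hδ : 0 < δ) :
    Hapr (A ∪ B) δ ≤ Hapr A δ + Hapr B δ := by
  obtain ⟨F, _, hF, hAF⟩ := exists_finrank_eq_Hapr hA hδ
  obtain ⟨F', _, hF', hBF'⟩ := exists_finrank_eq_Hapr hB hδ
  calc Hapr (A ∪ B) δ ≤ Module.finrank ℂ ↥(F ⊔ F') := by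
        refine Hapr_le_finrank_s7 _ fun x hx => hx.elim (fun hx => ?_) (fun hx => ?_)
        · obtain ⟨y, hy, hxy⟩ := hAF x hx
          exact ⟨y, Submodule.mem_sup_left hy, hxy⟩
        · obtain ⟨y, hy, hxy⟩ := hBF' x hx
          exact ⟨y, Submodule.mem_sup_right hy, hxy⟩
    _ ≤ Module.finrank ℂ F + Module.finrank ℂ F' :=
        Submodule.finrank_add_le_finrank_add_finrank _ _
    _ = Hapr A δ + Hapr B δ := by rw [hF, hF']

theorem Hapr_image_le (f : E →ₗ[ℂ] E') (hf : ∀ x, ‖f x‖ ≤ ‖x‖) (hA : A.Finite)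
    (hδ : 0 < δ) :
    Hapr (f '' A) δ ≤ Hapr A δ := by
  obtain ⟨F, _, hF, hAF⟩ := exists_finrank_eq_Hapr hA hδ
  calc Hapr (f '' A) δ ≤ Module.finrank ℂ (F.map f) := by
        refine Hapr_le_finrank_s7 _ ?_
        rintro _ ⟨x, hx, rfl⟩
        obtain ⟨y, hy, hxy⟩ := hAF x hx
        exact ⟨f y, Submodule.mem_map_of_mem hy, by simpa using (hf (x - y)).trans_lt hxy⟩
    _ ≤ Module.finrank ℂ F := Submodule.finrank_map_le f F
    _ = Hapr A δ := hF

theorem Hapr_subtype_image (K : Submodule ℂ E) [K.HasOrthogonalProjection] {X : Set K}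
    (hX : X.Finite) (hδ : 0 < δ) : Hapr (((↑) : K → E) '' X) δ = Hapr X δ := by
  refine le_antisymm (Hapr_image_le K.subtype (fun _ => le_rfl) hX hδ) ?_
  have hP : ∀ x, ‖K.orthogonalProjectionOnto x‖ ≤ ‖x‖ := fun x => by
    simpa using K.orthogonalProjectionOnto.le_of_opNorm_le K.orthogonalProjectionOnto_norm_le x
  simpa [Set.image_image] using
    Hapr_image_le (K.orthogonalProjectionOnto : E →ₗ[ℂ] K) hP (hX.image ((↑) : K → E)) hδ

theorem Hapr_orbitSegment_le_mul_ncard (f : E → E) (hA : A.Finite) (hδ : 0 < δ) (n : ℕ) :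
    Hapr (orbitSegment f A n) δ ≤ n * A.ncard := by
  induction n with
  | zero => simpa [orbitSegment] using Hapr_le_ncard (hA.orbitSegment (f := f) 0) hδ
  | succ n ih =>
    calc Hapr (orbitSegment f A (n + 1)) δ
        ≤ Hapr (orbitSegment f A n) δ + Hapr (f^[n] '' A) δ := by
          rw [orbitSegment_succ]; exact Hapr_union_le (hA.orbitSegment n) (hA.image _) hδ
      _ ≤ n * A.ncard + A.ncard :=
          add_le_add ih ((Hapr_le_ncard (hA.image _) hδ).trans (Set.ncard_image_le hA))
      _ = (n + 1) * A.ncard := by ring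

theorem Hapr_orbitSegment_le_of_near_combination (T : E →ₗᵢ[ℂ] E) {B : Finset E}
    {ε C η : ℝ} (hη : 0 < η)
    (hA : ∀ a ∈ A, ∃ c : E → ℂ, ∑ b ∈ B, ‖c b‖ ≤ C ∧ ‖a - ∑ b ∈ B, c b • b‖ < ε)
    (n : ℕ) : Hapr (orbitSegment T A n) (ε + C * η) ≤ Hapr (orbitSegment T B n) η := by
  obtain ⟨F, _, hF, hBF⟩ := exists_finrank_eq_Hapr (B.finite_toSet.orbitSegment n) hη
  refine hF ▸ Hapr_le_finrank_s7 F fun x hx => ?_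
  obtain ⟨k, hk, a, ha, rfl⟩ := mem_orbitSegment.1 hx
  obtain ⟨c, hcC, hac⟩ := hA a ha
  obtain ⟨y, hyF, hy⟩ := exists_near_sum_smul F B (fun b => (T ^ k) b) c fun b hb =>
    hBF _ (mem_orbitSegment.2 ⟨k, hk, b, hb, by rw [LinearIsometry.coe_pow]⟩)
  refine ⟨y, hyF, ?_⟩
  have hsplit : (⇑T)^[k] a - y =
      (T ^ k) (a - ∑ b ∈ B, c b • b) + (∑ b ∈ B, c b • (T ^ k) b - y) := by
    simp only [map_sub, map_sum, map_smul, LinearIsometry.coe_pow]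
    abel
  calc ‖(⇑T)^[k] a - y‖
        ≤ ‖a - ∑ b ∈ B, c b • b‖ + ‖∑ b ∈ B, c b • (T ^ k) b - y‖ := by
        rw [hsplit, ← LinearIsometry.norm_map (T ^ k) (a - _)]
        exact norm_add_le _ _
    _ < ε + C * η := add_lt_add_of_lt_of_le hac (hy.trans (mul_le_mul_of_nonneg_right hcC hη.le))

end Hapr

section Entropy

open Filter

variable {E : Type*} [NormedAddCommGroup E] [InnerProductSpace ℂ E] {A B : Set E} {δ : ℝ}

theorem haprδ_eq_limsup (T : E → E) (A : Set E) (δ : ℝ) :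
    haprδ T A δ = limsup (fun n : ℕ => (Hapr (orbitSegment T A n) δ : ℝ) / n) atTop :=
  rfl

theorem haprδ_nonneg (T : E → E) (A : Set E) (δ : ℝ) : 0 ≤ haprδ T A δ := by
  rw [haprδ_eq_limsup, limsup_eq]
  exact Real.sInf_nonneg fun a ha => ha.exists.elim fun n hn => le_trans (by positivity) hn

theorem haprω_nonneg (T : E → E) (A : Set E) : 0 ≤ haprω T A :=
  Real.iSup_nonneg fun δ => Real.iSup_nonneg fun _ => haprδ_nonneg T A δ

theorem Hapr_orbitSegment_div_le (T : E → E) (hA : A.Finite) (hδ : 0 < δ) (n : ℕ) :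
    (Hapr (orbitSegment T A n) δ : ℝ) / n ≤ A.ncard :=
  div_le_of_le_mul₀ (by positivity) (by positivity) <| by
    rw [mul_comm]; exact_mod_cast Hapr_orbitSegment_le_mul_ncard T hA hδ n

theorem haprδ_le_ncard (T : E → E) (hA : A.Finite) (hδ : 0 < δ) : haprδ T A δ ≤ A.ncard :=
  limsup_le_of_le (isCoboundedUnder_le_of_le atTop fun _ => by positivity)
    (Eventually.of_forall (Hapr_orbitSegment_div_le T hA hδ))

theorem haprδ_le_haprω (T : E → E) (hA : A.Finite) (hδ : 0 < δ) :
    haprδ T A δ ≤ haprω T A := by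
  refine le_ciSup_of_le ⟨A.ncard, ?_⟩ δ (by rw [ciSup_pos hδ])
  rintro _ ⟨δ', rfl⟩
  exact Real.iSup_le (fun hδ' => haprδ_le_ncard T hA hδ') (Nat.cast_nonneg _)

theorem haprω_le {T : E → E} {c : ℝ} (hc : 0 ≤ c) (h : ∀ δ > 0, haprδ T A δ ≤ c) :
    haprω T A ≤ c :=
  Real.iSup_le (fun δ => Real.iSup_le (h δ) hc) hc

theorem haprδ_le_of_Hapr_le_add (T : E → E) {δ' : ℝ}
    (hB : B.Finite) (hδ' : 0 < δ') (c : ℕ)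
    (h : ∀ n, Hapr (orbitSegment T A n) δ ≤ Hapr (orbitSegment T B n) δ' + c) :
    haprδ T A δ ≤ haprδ T B δ' := by
  set v := fun n : ℕ => (Hapr (orbitSegment T B n) δ' : ℝ) / n
  set w := fun n : ℕ => (c : ℝ) / n
  have hw : Tendsto w atTop (nhds 0) := tendsto_const_div_atTop_nhds_zero_nat (c : ℝ)
  have hv : IsBoundedUnder (· ≤ ·) atTop v :=
    isBoundedUnder_of ⟨_, Hapr_orbitSegment_div_le T hB hδ'⟩
  have hv' : IsBoundedUnder (· ≥ ·) atTop v := isBoundedUnder_of ⟨0, fun _ => by positivity⟩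
  calc haprδ T A δ ≤ limsup (v + w) atTop := by
        refine limsup_le_limsup (Eventually.of_forall fun n => ?_)
          (isCoboundedUnder_le_of_le atTop fun _ => by positivity)
          (isBoundedUnder_le_add hv hw.isBoundedUnder_le)
        rw [Pi.add_apply, ← add_div]
        exact div_le_div_of_nonneg_right (by exact_mod_cast h n) (Nat.cast_nonneg n)
    _ ≤ limsup v atTop + limsup w atTop :=
        limsup_add_le hv' hv hw.isCoboundedUnder_le hw.isBoundedUnder_le
    _ = haprδ T B δ' := by rw [hw.limsup_eq, add_zero]; rfl

theorem haprω_image_le (T : E → E) (e : E →ₗ[ℂ] E) (he : ∀ x, ‖e x‖ ≤ ‖x‖)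
    (hcomm : Function.Commute e T) (hA : A.Finite) : haprω T (e '' A) ≤ haprω T A := by
  refine haprω_le (haprω_nonneg T A) fun δ hδ => ?_
  refine (haprδ_le_of_Hapr_le_add T hA hδ 0 fun n => ?_).trans (haprδ_le_haprω T hA hδ)
  rw [← Function.Semiconj.image_orbitSegment hcomm, add_zero]
  exact Hapr_image_le e he (hA.orbitSegment n) hδ

theorem haprω_orbitSegment_le (T : E →ₗᵢ[ℂ] E) (hA : A.Finite) (p : ℕ) :
    haprω T (orbitSegment T A p) ≤ haprω T A := by
  refine haprω_le (haprω_nonneg T A) fun δ hδ => ?_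
  refine (haprδ_le_of_Hapr_le_add T hA hδ (Hapr (orbitSegment T A p) δ) fun n => ?_).trans
    (haprδ_le_haprω T hA hδ)
  have hshift : Hapr ((⇑T)^[n] '' orbitSegment T A p) δ ≤ Hapr (orbitSegment T A p) δ := by
    rw [← LinearIsometry.coe_pow]
    exact Hapr_image_le (T ^ n).toLinearMap (fun x => ((T ^ n).norm_map x).le)
      (hA.orbitSegment p) hδ
  calc Hapr (orbitSegment T (orbitSegment T A p) n) δ ≤ Hapr (orbitSegment T A (n + p)) δ :=
        Hapr_mono (orbitSegment_orbitSegment_subset n p) (hA.orbitSegment _) hδ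
    _ ≤ Hapr (orbitSegment T A n) δ + Hapr ((⇑T)^[n] '' orbitSegment T A p) δ := by
        rw [orbitSegment_add]
        exact Hapr_union_le (hA.orbitSegment n) ((hA.orbitSegment p).image _) hδ
    _ ≤ Hapr (orbitSegment T A n) δ + Hapr (orbitSegment T A p) δ := by gcongr

theorem haprδ_le_haprω_of_near_span (T : E →ₗᵢ[ℂ] E) (hA : A.Finite) (hB : B.Finite)
    (hδ : 0 < δ) (h : ∀ a ∈ A, ∃ z ∈ Submodule.span ℂ B, ‖a - z‖ < δ / 2) :
    haprδ T A δ ≤ haprω T B := by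
  lift B to Finset E using hB
  choose! z hzB hz using h
  choose! c _ hc using fun a ha => Submodule.mem_span_finset.1 (hzB a ha)
  obtain ⟨C, hC⟩ := (hA.image fun a => ∑ b ∈ B, ‖c a b‖).bddAbove
  set C' := max C 1
  have hC' : 0 < C' := lt_max_of_lt_right one_pos
  have hη : 0 < δ / (2 * C') := by positivity
  have hscale : δ / 2 + C' * (δ / (2 * C')) = δ := by field_simp; ring
  have key := Hapr_orbitSegment_le_of_near_combination T (C := C') hη fun a ha =>
    ⟨c a, (hC ⟨a, ha, rfl⟩).trans (le_max_left C 1), (hc a ha).symm ▸ hz a ha⟩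
  rw [hscale] at key
  exact (haprδ_le_of_Hapr_le_add T B.finite_toSet hη 0 (by simpa using key)).trans
    (haprδ_le_haprω T B.finite_toSet hη)

end Entropy

section Unitary

variable {E : Type*} [NormedAddCommGroup E] [InnerProductSpace ℂ E] {A B : Set E}

theorem LinearIsometryEquiv.mem_zpow_image_orbitSegment (T : E ≃ₗᵢ[ℂ] E) {m : ℕ} {x : E} :
    x ∈ ⇑(T ^ (-(m : ℤ))) '' orbitSegment T B (2 * m + 1) ↔
      ∃ k : ℤ, -(m : ℤ) ≤ k ∧ k ≤ m ∧ x ∈ ⇑(T ^ k) '' B := by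
  have hshift : ∀ (j : ℕ) (b : E),
      (T ^ (-(m : ℤ))) ((⇑T)^[j] b) = (T ^ ((j : ℤ) - m)) b := by
    intro j b
    rw [← T.coe_pow, ← zpow_natCast, ← Function.comp_apply (f := ⇑(T ^ (-(m : ℤ)))),
      ← LinearIsometryEquiv.coe_mul, ← zpow_add, neg_add_eq_sub]
  constructor
  · rintro ⟨_, hy, rfl⟩
    obtain ⟨j, hj, b, hb, rfl⟩ := mem_orbitSegment.1 hy
    exact ⟨j - m, by omega, by omega, b, hb, (hshift j b).symm⟩
  · rintro ⟨k, hk₁, hk₂, b, hb, rfl⟩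
    refine ⟨_, mem_orbitSegment.2 ⟨(k + m).toNat, by omega, b, hb, rfl⟩, ?_⟩
    rw [hshift, Int.toNat_of_nonneg (by omega), add_sub_cancel_right]

theorem haprω_le_of_subset_closure_span_orbit (T : E ≃ₗᵢ[ℂ] E)
    (hA : A.Finite) (hB : B.Finite)
    (h : A ⊆ closure (Submodule.span ℂ (⋃ k : ℤ, ⇑(T ^ k) '' B))) :
    haprω T A ≤ haprω T B := by
  set W : ℕ → Set E := fun m => ⇑(T ^ (-(m : ℤ))) '' orbitSegment T B (2 * m + 1)
  have hW_mono : Monotone W := fun m m' hm x hx => by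
    obtain ⟨k, hk₁, hk₂, hx⟩ := T.mem_zpow_image_orbitSegment.1 hx
    exact T.mem_zpow_image_orbitSegment.2 ⟨k, by omega, by omega, hx⟩
  have hW_iUnion : ⋃ k : ℤ, ⇑(T ^ k) '' B = ⋃ m, W m := by
    ext x
    simp only [Set.mem_iUnion, W, T.mem_zpow_image_orbitSegment]
    exact ⟨fun ⟨k, hk⟩ => ⟨k.natAbs, k, by omega, by omega, hk⟩,
      fun ⟨_, k, _, _, hk⟩ => ⟨k, hk⟩⟩
  refine haprω_le (haprω_nonneg _ _) fun δ hδ => ?_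
  have hnear : ∀ a ∈ A, ∀ᶠ m in Filter.atTop,
      ∃ z ∈ Submodule.span ℂ (W m), ‖a - z‖ < δ / 2 := by
    intro a ha
    obtain ⟨z, hz, haz⟩ := Metric.mem_closure_iff.1 (h ha) (δ / 2) (by positivity)
    rw [SetLike.mem_coe, hW_iUnion, Submodule.span_iUnion, Submodule.mem_iSup_of_directed _
      (Monotone.directed_le fun _ _ hm => Submodule.span_mono (hW_mono hm))] at hz
    obtain ⟨m₀, hm₀⟩ := hz
    exact Filter.eventually_atTop.2
      ⟨m₀, fun _ hm => ⟨z, Submodule.span_mono (hW_mono hm) hm₀, by rwa [← dist_eq_norm]⟩⟩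
  obtain ⟨m, hm⟩ := ((Filter.eventually_all_finite hA).2 hnear).exists
  have hcomm : Function.Commute (T ^ (-(m : ℤ))) T := fun x => by
    rw [← Function.comp_apply (f := ⇑(T ^ (-(m : ℤ)))), ← LinearIsometryEquiv.coe_mul,
      ((Commute.refl T).zpow_left _).eq, LinearIsometryEquiv.coe_mul, Function.comp_apply]
  calc haprδ T A δ ≤ haprω T (W m) :=
        haprδ_le_haprω_of_near_span T.toLinearIsometry hA ((hB.orbitSegment _).image _) hδ hm
    _ ≤ haprω T (orbitSegment T B (2 * m + 1)) :=
        haprω_image_le T (T ^ (-(m : ℤ))).toLinearEquiv.toLinearMap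
          (fun x => ((T ^ (-(m : ℤ))).norm_map x).le) hcomm (hB.orbitSegment _)
    _ ≤ haprω T B := haprω_orbitSegment_le T.toLinearIsometry hB _

end Unitary

theorem Submodule.span_iUnion_image_span {R M ι F : Type*} [Semiring R] [AddCommMonoid M]
    [Module R M] [FunLike F M M] [LinearMapClass F R M M] (f : ι → F) (s : Set M) :
    span R (⋃ i, f i '' span R s) = span R (⋃ i, f i '' s) :=
  le_antisymm
    (span_le.2 <| Set.iUnion_subset fun i => (image_span_subset_span (f i : M →ₗ[R] M) s).trans
      (span_mono (Set.subset_iUnion (fun i => f i '' s) i)))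
    (span_mono (Set.iUnion_mono fun _ => Set.image_mono subset_span))

section Subspace

variable {E : Type*} [NormedAddCommGroup E] [InnerProductSpace ℂ E]

theorem LinearIsometryEquiv.span_le_span_iUnion_zpow_image (T : E ≃ₗᵢ[ℂ] E) (s : Set E) :
    Submodule.span ℂ s ≤ Submodule.span ℂ (⋃ k : ℤ, ⇑(T ^ k) '' s) :=
  Submodule.span_mono (Set.subset_iUnion_of_subset 0 (by simp))

theorem haprSub_eq_haprω {T : E → E} {F : Submodule ℂ E} {s : Finset E} (hs : (s : Set E) ⊆ F)
    (h : ∀ ω : Finset E, (ω : Set E) ⊆ F → haprω T ω ≤ haprω T s) :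
    haprSub T F = haprω T s := by
  have hle : ∀ ω : Finset E, (⨆ _ : (ω : Set E) ⊆ F, haprω T ω) ≤ haprω T s :=
    fun ω => Real.iSup_le (h ω) (haprω_nonneg T s)
  exact le_antisymm (Real.iSup_le hle (haprω_nonneg T s))
    (le_ciSup_of_le ⟨_, Set.forall_mem_range.2 hle⟩ s (by rw [ciSup_pos hs]))

theorem haprSub_span (T : E ≃ₗᵢ[ℂ] E) (s : Finset E) :
    haprSub T (Submodule.span ℂ s) = haprω T s :=
  haprSub_eq_haprω Submodule.subset_span fun ω hω =>
    haprω_le_of_subset_closure_span_orbit T ω.finite_toSet s.finite_toSet fun _ hx =>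
      subset_closure (T.span_le_span_iUnion_zpow_image s (hω hx))

theorem iSup_haprω_eq_iSup_haprSub (T : E ≃ₗᵢ[ℂ] E) :
    (⨆ ω : Finset E, haprω T ω) =
      ⨆ (F : Submodule ℂ E) (_ : FiniteDimensional ℂ F), haprSub T F := by
  refine csSup_eq_csSup_of_forall_exists_le ?_ ?_
  · rintro _ ⟨ω, rfl⟩
    refine ⟨_, ⟨Submodule.span ℂ ω, rfl⟩, ?_⟩
    dsimp only
    rw [ciSup_pos (FiniteDimensional.span_finset ℂ ω), haprSub_span]
  · rintro _ ⟨F, rfl⟩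
    by_cases hF : FiniteDimensional ℂ F
    · obtain ⟨s, rfl⟩ := (Submodule.fg_iff_finiteDimensional F).2 hF
      exact ⟨_, ⟨s, rfl⟩, by dsimp only; rw [ciSup_pos hF, haprSub_span]⟩
    · refine ⟨_, ⟨∅, rfl⟩, ?_⟩
      dsimp only
      rw [ciSup_neg hF, Real.sSup_empty]
      exact haprω_nonneg _ _

theorem haprω_restrict (K : Submodule ℂ E) [K.HasOrthogonalProjection] {S : K → K}
    {T : E → E} (hS : ∀ x, (S x : E) = T x) {X : Set K} (hX : X.Finite) :
    haprω S X = haprω T ((↑) '' X) := by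
  refine iSup_congr fun δ => iSup_congr fun hδ => ?_
  simp only [haprδ_eq_limsup]
  congr 1
  funext n
  rw [← Function.Semiconj.image_orbitSegment (f := S) hS,
    Hapr_subtype_image K (hX.orbitSegment n) hδ]

theorem iSup_haprω_restrict (K : Submodule ℂ E) [K.HasOrthogonalProjection] {S : K → K}
    {T : E → E} (hS : ∀ x, (S x : E) = T x) :
    (⨆ X : Finset K, haprω S X) = haprSub T K := by
  classical
  refine csSup_eq_csSup_of_forall_exists_le ?_ ?_
  · rintro _ ⟨X, rfl⟩
    refine ⟨_, ⟨X.map (Function.Embedding.subtype _), rfl⟩, ?_⟩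
    have hX : ((X.map (Function.Embedding.subtype _) : Finset E) : Set E) ⊆ K := by
      rw [Finset.coe_map]; exact Subtype.coe_image_subset _ _
    dsimp only
    rw [ciSup_pos hX, haprω_restrict K hS X.finite_toSet, Finset.coe_map]
    rfl
  · rintro _ ⟨ω, rfl⟩
    by_cases hω : (ω : Set E) ⊆ K
    · refine ⟨_, ⟨ω.subtype (· ∈ K), rfl⟩, ?_⟩
      dsimp only
      rw [ciSup_pos hω, haprω_restrict K hS (Finset.finite_toSet _),
        ← Function.Embedding.coe_subtype, ← Finset.coe_map,
        Finset.subtype_map_of_mem (p := (· ∈ K)) hω]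
    · refine ⟨_, ⟨∅, rfl⟩, ?_⟩
      dsimp only
      rw [ciSup_neg hω, Real.sSup_empty]
      exact haprω_nonneg _ _

end Subspace

theorem stmt7_general {H : Type*} [NormedAddCommGroup H] [InnerProductSpace ℂ H] [CompleteSpace H]
    (T : H ≃ₗᵢ[ℂ] H) (F : Submodule ℂ H)
    (ω : Finset H)
    (hspan : Submodule.span ℂ (ω : Set H) = F) :
    (∀ G : Submodule ℂ H,
      G = (Submodule.span ℂ (⋃ k : ℤ, ⇑(T ^ k) '' (F : Set H))).topologicalClosure →
      ∀ S : ↥G ≃ₗᵢ[ℂ] ↥G, (∀ x : ↥G, ((S x : ↥G) : H) = T (x : H)) →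
        haprSub (⇑T) F = haprω (⇑T) (ω : Set H) ∧
        haprω (⇑T) (ω : Set H) = (⨆ ω' : Finset ↥G, haprω (⇑S) (ω' : Set ↥G)) ∧
        (⨆ ω' : Finset ↥G, haprω (⇑S) (ω' : Set ↥G)) = haprSub (⇑T) G) ∧
    (⨆ ω₀ : Finset H, haprω (⇑T) (ω₀ : Set H)) =
      ⨆ (F' : Submodule ℂ H) (_ : FiniteDimensional ℂ ↥F'), haprSub (⇑T) F' := by
  subst hspan
  refine ⟨fun G hG S hS => ?_, iSup_haprω_eq_iSup_haprSub T⟩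
  have : CompleteSpace G := by rw [hG]; infer_instance
  have hG_eq : (G : Set H) = closure (Submodule.span ℂ (⋃ k : ℤ, ⇑(T ^ k) '' ω)) := by
    rw [hG, Submodule.topologicalClosure_coe, Submodule.span_iUnion_image_span]
  have hωG : (ω : Set H) ⊆ G := hG_eq ▸ fun x hx =>
    subset_closure (T.span_le_span_iUnion_zpow_image _ (Submodule.subset_span hx))
  have hG_sub : haprSub T G = haprω T ω := haprSub_eq_haprω hωG fun ω' hω' =>
    haprω_le_of_subset_closure_span_orbit T ω'.finite_toSet ω.finite_toSet (hG_eq ▸ hω')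
  have hS_sup := iSup_haprω_restrict G hS
  exact ⟨haprSub_span T ω, (hS_sup.trans hG_sub).symm, hS_sup⟩

/-- Let `T` be a unitary operator on a Hilbert space `H`, `F ⊆ H` a
finite-dimensional subspace and `ω ⊆ F` a finite subset with `F = span ω`. Then
`h_apr(T, F) = h_apr(T, ω) = h_apr(T ↾ G) = h_apr(T, G)`, where
`G = closed span ⋃_{k ∈ ℤ} T^k F` (the restriction `T ↾ G` is the unitary operator `S` on the
Hilbert space `G` induced by `T`, and `h_apr` of an operator is `h_apr` of the full space).
Moreover, `h_apr(T) = sup_F h_apr(T, F)`, the supremum over all finite-dimensional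
subspaces `F ⊆ H`. -/
theorem stmt7 {H : Type*} [NormedAddCommGroup H] [InnerProductSpace ℂ H] [CompleteSpace H]
    (T : H ≃ₗᵢ[ℂ] H) (F : Submodule ℂ H) [FiniteDimensional ℂ ↥F]
    (ω : Finset H) (hωF : (ω : Set H) ⊆ (F : Set H))
    (hspan : Submodule.span ℂ (ω : Set H) = F) :
    (∀ G : Submodule ℂ H,
      G = (Submodule.span ℂ (⋃ k : ℤ, ⇑(T ^ k) '' (F : Set H))).topologicalClosure →
      ∀ S : ↥G ≃ₗᵢ[ℂ] ↥G, (∀ x : ↥G, ((S x : ↥G) : H) = T (x : H)) →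
        haprSub (⇑T) F = haprω (⇑T) (ω : Set H) ∧
        haprω (⇑T) (ω : Set H) = (⨆ ω' : Finset ↥G, haprω (⇑S) (ω' : Set ↥G)) ∧
        (⨆ ω' : Finset ↥G, haprω (⇑S) (ω' : Set ↥G)) = haprSub (⇑T) G) ∧
    (⨆ ω₀ : Finset H, haprω (⇑T) (ω₀ : Set H)) =
      ⨆ (F' : Submodule ℂ H) (_ : FiniteDimensional ℂ ↥F'), haprSub (⇑T) F' :=
  stmt7_general T F ω hspan
end

section
/- Let T : H → H be a unitary operator on a Hilbert space H that has a countable Lebesgue component. Then h_apr(T) = ∞, i.e., the approximation entropy of T is not bounded by any real number. -/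
open MeasureTheory

/-- A unitary operator `T` on a Hilbert space has a *countable Lebesgue component* if there is
an orthonormal family `e : ℕ × ℤ → H` with `T (e (n, k)) = e (n, k + 1)`. (Equivalently:
`H₀ := closed span of the e (n, k)` is a closed separable subspace with `T H₀ = H₀` on which
`T` has countable Lebesgue spectrum, the `xₙ := e (n, 0)` being the orthonormal sequence whose
orbits `(T^k xₙ)_{k ∈ ℤ} = (e (n, k))_{k ∈ ℤ}` are orthonormal bases of the cyclic subspaces
`Z(xₙ; T)` with `H₀ = ⊕ₙ Z(xₙ; T)`.) -/
def HasCountableLebesgueComponent {H : Type*} [NormedAddCommGroup H]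
    [InnerProductSpace ℂ H] (T : H → H) : Prop :=
  ∃ e : ℕ × ℤ → H, Orthonormal ℂ e ∧ ∀ (n : ℕ) (k : ℤ), T (e (n, k)) = e (n, k + 1)

/-! A finite-dimensional subspace `F` that `δ`-approximates `M` orthonormal vectors `vᵢ` has
`dim F ≥ M (1 - δ²)`: each `‖P_F vᵢ‖² ≥ 1 - δ²`, while by Bessel's inequality applied to an
orthonormal basis of `F` the sum `∑ᵢ ‖P_F vᵢ‖²` is at most `dim F`. For `ω = {e (m, 0) : m < N}` the
first `n` iterates of `ω` under `T` are the `N n` orthonormal vectors `e (m, k)`, `k < n`, so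
`h_apr(T, ω, δ) ≥ N (1 - δ²)` with `N` arbitrary. -/

open scoped InnerProductSpace
open Finset

section Projection

variable {𝕜 E : Type*} [RCLike 𝕜] [NormedAddCommGroup E] [InnerProductSpace 𝕜 E]

theorem Submodule.one_sub_sq_le_norm_starProjection_sq (K : Submodule 𝕜 E)
    [K.HasOrthogonalProjection] {x y : E} {δ : ℝ} (hx : ‖x‖ = 1) (hy : y ∈ K)
    (hxy : ‖x - y‖ < δ) : 1 - δ ^ 2 ≤ ‖K.starProjection x‖ ^ 2 := by
  have hdist : ‖x - K.starProjection x‖ < δ := by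
    refine lt_of_le_of_lt ?_ hxy
    rw [K.starProjection_minimal]
    exact ciInf_le ⟨0, by rintro r ⟨v, rfl⟩; exact norm_nonneg _⟩ (⟨y, hy⟩ : K)
  have hpyth := K.norm_sq_eq_add_norm_sq_starProjection x
  rw [K.starProjection_orthogonal, sub_apply, ContinuousLinearMap.id_apply, hx] at hpyth
  nlinarith [norm_nonneg (x - K.starProjection x)]

theorem Submodule.norm_starProjection_sq_eq_sum (K : Submodule 𝕜 E) [FiniteDimensional 𝕜 K]
    (u : E) :
    ‖K.starProjection u‖ ^ 2 = ∑ j, ‖⟪(stdOrthonormalBasis 𝕜 K j : E), u⟫_𝕜‖ ^ 2 := by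
  rw [K.starProjection_apply, Submodule.norm_coe,
    ← (stdOrthonormalBasis 𝕜 K).sum_sq_norm_inner_right]
  refine Finset.sum_congr rfl fun j _ => ?_
  rw [Submodule.coe_inner, ← K.starProjection_apply, ← K.inner_starProjection_left_eq_right,
    K.starProjection_mem_subspace_eq_self]

theorem Orthonormal.sum_norm_starProjection_sq_le_finrank {ι : Type*} {v : ι → E}
    (hv : Orthonormal 𝕜 v) (s : Finset ι) (K : Submodule 𝕜 E) [FiniteDimensional 𝕜 K] :
    ∑ i ∈ s, ‖K.starProjection (v i)‖ ^ 2 ≤ Module.finrank 𝕜 K := by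
  set b := stdOrthonormalBasis 𝕜 K
  calc ∑ i ∈ s, ‖K.starProjection (v i)‖ ^ 2
      = ∑ j, ∑ i ∈ s, ‖⟪v i, (b j : E)⟫_𝕜‖ ^ 2 := by
        simp only [K.norm_starProjection_sq_eq_sum]
        rw [Finset.sum_comm]
        exact sum_congr rfl fun j _ => sum_congr rfl fun i _ => by rw [norm_inner_symm]
    _ ≤ ∑ _j : Fin (Module.finrank 𝕜 K), (1 : ℝ) := by
        refine Finset.sum_le_sum fun j _ => ?_
        calc ∑ i ∈ s, ‖⟪v i, (b j : E)⟫_𝕜‖ ^ 2 ≤ ‖(b j : E)‖ ^ 2 := hv.sum_inner_products_le _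
          _ = 1 := by rw [Submodule.norm_coe, b.orthonormal.1 j, one_pow]
    _ = Module.finrank 𝕜 K := by simp

theorem Orthonormal.card_mul_le_finrank {ι : Type*} [Fintype ι] {v : ι → E}
    (hv : Orthonormal 𝕜 v) (K : Submodule 𝕜 E) [FiniteDimensional 𝕜 K] {δ : ℝ}
    (happrox : ∀ i, ∃ y ∈ K, ‖v i - y‖ < δ) :
    Fintype.card ι * (1 - δ ^ 2) ≤ Module.finrank 𝕜 K := by
  calc Fintype.card ι * (1 - δ ^ 2) = ∑ _i : ι, (1 - δ ^ 2) := by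
        rw [sum_const, card_univ, nsmul_eq_mul]
    _ ≤ ∑ i, ‖K.starProjection (v i)‖ ^ 2 := Finset.sum_le_sum fun i _ => by
        obtain ⟨y, hy, hvy⟩ := happrox i
        exact K.one_sub_sq_le_norm_starProjection_sq (hv.1 i) hy hvy
    _ ≤ Module.finrank 𝕜 K := hv.sum_norm_starProjection_sq_le_finrank _ K

end Projection

theorem iUnion_iterate_image_eq {α : Type*} [DecidableEq α] (f : α → α) (ω : Finset α) (n : ℕ) :
    (⋃ k < n, f^[k] '' (ω : Set α)) = ↑((range n).biUnion fun k => ω.image f^[k]) := by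
  ext
  simp

theorem iterate_apply_eq_of_shift {α β : Type*} {f : α → α} {e : β × ℤ → α}
    (hshift : ∀ n k, f (e (n, k)) = e (n, k + 1)) (n : β) (k : ℤ) (j : ℕ) :
    f^[j] (e (n, k)) = e (n, k + j) := by
  induction j with
  | zero => simp
  | succ j ih => rw [Function.iterate_succ_apply', ih, hshift, Nat.cast_succ, add_assoc]

section Hapr

variable {H : Type*} [NormedAddCommGroup H] [InnerProductSpace ℂ H]

theorem finrank_span_mem_Hapr_set {S : Set H} (hS : S.Finite) {δ : ℝ} (hδ : 0 < δ) :
    Module.finrank ℂ (Submodule.span ℂ S) ∈ {d : ℕ | ∃ F : Submodule ℂ H,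
      FiniteDimensional ℂ F ∧ Module.finrank ℂ F = d ∧ ∀ x ∈ S, ∃ y ∈ F, ‖x - y‖ < δ} :=
  ⟨_, FiniteDimensional.span_of_finite ℂ hS, rfl,
    fun x hx => ⟨x, Submodule.subset_span hx, by simpa using hδ⟩⟩

theorem Hapr_le_card (t : Finset H) {δ : ℝ} (hδ : 0 < δ) : Hapr (t : Set H) δ ≤ #t :=
  (Nat.sInf_le (finrank_span_mem_Hapr_set t.finite_toSet hδ)).trans
    (finrank_span_finset_le_card t)

theorem Orthonormal.card_mul_le_Hapr {ι : Type*} [Fintype ι] {v : ι → H}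
    (hv : Orthonormal ℂ v) {S : Set H} (hS : S.Finite) (hvS : ∀ i, v i ∈ S) {δ : ℝ}
    (hδ : 0 < δ) : Fintype.card ι * (1 - δ ^ 2) ≤ Hapr S δ := by
  obtain ⟨F, hF, hrank, happrox⟩ := Nat.sInf_mem ⟨_, finrank_span_mem_Hapr_set hS hδ⟩
  rw [Hapr, ← hrank]
  exact hv.card_mul_le_finrank F fun i => happrox _ (hvS i)

theorem Hapr_iUnion_iterate_image_le (f : H → H) (ω : Finset H) (n : ℕ) {δ : ℝ} (hδ : 0 < δ) :
    Hapr (⋃ k < n, f^[k] '' (ω : Set H)) δ ≤ n * #ω := by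
  classical
  rw [iUnion_iterate_image_eq]
  refine (Hapr_le_card _ hδ).trans (card_biUnion_le.trans ?_)
  simpa using Finset.sum_le_sum fun k (_ : k ∈ range n) => card_image_le (s := ω) (f := f^[k])

theorem Hapr_iUnion_iterate_image_div_le (f : H → H) (ω : Finset H) (n : ℕ) {δ : ℝ}
    (hδ : 0 < δ) : (Hapr (⋃ k < n, f^[k] '' (ω : Set H)) δ : ℝ) / n ≤ #ω := by
  refine div_le_of_le_mul₀ n.cast_nonneg (Nat.cast_nonneg _) ?_
  rw [mul_comm]
  exact_mod_cast Hapr_iUnion_iterate_image_le f ω n hδ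

theorem haprδ_le_card (f : H → H) (ω : Finset H) {δ : ℝ} (hδ : 0 < δ) :
    haprδ f ω δ ≤ #ω :=
  Filter.limsup_le_of_le
    (Filter.isBoundedUnder_of ⟨0, fun _ => by positivity⟩).isCoboundedUnder_le
    (Filter.Eventually.of_forall fun n => Hapr_iUnion_iterate_image_div_le f ω n hδ)

theorem haprδ_le_haprω_s10 (f : H → H) (ω : Finset H) {δ : ℝ} (hδ : 0 < δ) :
    haprδ f ω δ ≤ haprω f ω := by
  unfold haprω
  have hbdd : BddAbove (Set.range fun δ : ℝ => ⨆ _ : 0 < δ, haprδ f ω δ) := by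
    refine ⟨#ω, ?_⟩
    rintro _ ⟨δ', rfl⟩
    exact Real.iSup_le (fun hδ' => haprδ_le_card f ω hδ') (Nat.cast_nonneg _)
  have h := le_ciSup hbdd δ
  rwa [ciSup_pos hδ] at h

theorem le_haprδ_of_orthonormal (f : H → H) (ω : Finset H) {δ : ℝ} (hδ : 0 < δ) (N : ℕ)
    (horth : ∀ n, ∃ v : Fin N × Fin n → H, Orthonormal ℂ v ∧
      ∀ p, v p ∈ ⋃ k < n, f^[k] '' (ω : Set H)) :
    N * (1 - δ ^ 2) ≤ haprδ f ω δ := by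
  refine Filter.le_limsup_of_frequently_le (Filter.Eventually.frequently ?_)
    (Filter.isBoundedUnder_of ⟨#ω, fun n => Hapr_iUnion_iterate_image_div_le f ω n hδ⟩)
  · filter_upwards [Filter.eventually_gt_atTop 0] with n hn
    obtain ⟨v, hv, hvS⟩ := horth n
    have hS : (⋃ k < n, f^[k] '' (ω : Set H)).Finite :=
      (Set.finite_lt_nat n).biUnion fun k _ => ω.finite_toSet.image _
    have hcard := hv.card_mul_le_Hapr hS hvS hδ
    rw [Fintype.card_prod, Fintype.card_fin, Fintype.card_fin, Nat.cast_mul] at hcard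
    rw [le_div_iff₀ (by exact_mod_cast hn)]
    linarith

theorem Orthonormal.exists_orthonormal_mem_iUnion_iterate_image [DecidableEq H] {f : H → H}
    {e : ℕ × ℤ → H} (he : Orthonormal ℂ e) (hshift : ∀ n k, f (e (n, k)) = e (n, k + 1))
    (N n : ℕ) : ∃ v : Fin N × Fin n → H, Orthonormal ℂ v ∧
      ∀ p, v p ∈ ⋃ k < n, f^[k] '' ↑((range N).image fun m => e (m, 0)) := by
  refine ⟨fun p => e (p.1, p.2), he.comp _ fun p q hpq => ?_, fun p => ?_⟩
  · simp only [Prod.mk.injEq, Nat.cast_inj, Fin.val_inj] at hpq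
    exact Prod.ext hpq.1 hpq.2
  · refine Set.mem_iUnion₂.2 ⟨p.2, p.2.2, e (p.1, 0), by simpa using ⟨p.1, p.1.2, rfl⟩, ?_⟩
    rw [iterate_apply_eq_of_shift hshift, zero_add]

end Hapr

theorem stmt10_general {H : Type*} [NormedAddCommGroup H] [InnerProductSpace ℂ H]
    (T : H ≃ₗᵢ[ℂ] H) (hT : HasCountableLebesgueComponent (⇑T)) :
    ∀ C : ℝ, ∃ ω : Finset H, C < haprω (⇑T) (ω : Set H) := by
  classical
  intro C
  obtain ⟨e, he, hshift⟩ := hT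
  obtain ⟨N, hN⟩ := exists_nat_gt (4 / 3 * C)
  refine ⟨(range N).image fun m => e (m, 0), ?_⟩
  calc C < N * (1 - (1 / 2 : ℝ) ^ 2) := by linarith
    _ ≤ haprδ T _ (1 / 2) := le_haprδ_of_orthonormal _ _ (by norm_num) N
        (he.exists_orthonormal_mem_iUnion_iterate_image hshift N)
    _ ≤ haprω T _ := haprδ_le_haprω_s10 _ _ (by norm_num)

/-- If a unitary operator `T` on a Hilbert space `H` has a countable Lebesgue
component, then `h_apr(T) = ∞`, i.e. the approximation entropy of `T` is not bounded by any
real number. -/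
theorem stmt10 {H : Type*} [NormedAddCommGroup H] [InnerProductSpace ℂ H] [CompleteSpace H]
    (T : H ≃ₗᵢ[ℂ] H) (hT : HasCountableLebesgueComponent (⇑T)) :
    ∀ C : ℝ, ∃ ω : Finset H, C < haprω (⇑T) (ω : Set H) :=
  stmt10_general T hT
end
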